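/- In the dual-opinion scalar system with 2/(φ·(h-1)+2) < b < 1, if x(k) ≥ x̂(1,h,b) for some time k ≥ 0, then there exists T > k such that x(t) < x̂(1,h,b) for all t > T. -/

import Mathlib

open Filter Topology

/-- Aggregate explicit opinion received from the in-group side:
`A(y) = h·y + 1 - y`. -/
noncomputable def A (h y : ℝ) : ℝ := h * y + 1 - y

/-- Aggregate explicit opinion received from the out-group side:
`B(y) = y + h·(1 - y)`. -/
noncomputable def B (h y : ℝ) : ℝ := y + h * (1 - y)

/-- The function `g(x,b)` of the paper, for `b ∈ (0,1)`:
`g(x,b) = (x^{1-b} - (1-x)^{1-b}) / (x·(1-x)^{1-b} - (1-x)·x^{1-b})` for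
`x ∈ (1/2,1)` and `g(1/2,b) = 2/b - 2`. -/
noncomputable def g (x b : ℝ) : ℝ :=
  if x = 1 / 2 then 2 / b - 2
  else (x ^ (1 - b) - (1 - x) ^ (1 - b)) /
    (x * (1 - x) ^ (1 - b) - (1 - x) * x ^ (1 - b))

/-!
Write `F(x, y) = x^b A(y) / (x^b A(y) + (1-x)^b B(y))` for the `x`-update. Unwinding the
definition of `g`, the inequality `g(z, b) ≥ h - 1` says exactly that `F(z, z) ≤ z`, and `g` is
increasing in `z` (after the substitution `r = z / (1 - z)` this is a calculus exercise ending in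
a weighted AM-GM inequality). Hence `F(z, z) ≤ z` for all `z ∈ [x̂, 1)`.

After the first step `1/2 < y(t) < x(t)`, and `F` is strictly increasing in both arguments. So as
long as `x(t) ≥ x̂` we get `x(t+1) = F(x(t), y(t)) < F(x(t), x(t)) ≤ x(t)`. If this went on
forever, `x` would decrease to some `L ∈ [x̂, 1)`, `y` would converge to the fixed point `y* < L`
of its affine recursion, and in the limit `L = F(L, y*) < F(L, L) ≤ L`. So `x` drops below `x̂`
at some time after `k`, and from then on `x(t+1) = F(x(t), y(t)) < F(x̂, x̂) ≤ x̂`.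
-/

open Real Set

lemma rpow_one_sub_mul_rpow {z : ℝ} (hz : 0 < z) (b : ℝ) : z ^ (1 - b) * z ^ b = z := by
  rw [← rpow_add hz, sub_add_cancel, rpow_one]

lemma two_mul_rpow_le {c r : ℝ} (hc₀ : -1 ≤ c) (hc₁ : c ≤ 1) (hr : 0 < r) :
    2 * r ^ (2 * c - 1) ≤ (c + 1) * r ^ c + (1 - c) * r ^ (c - 2) := by
  have hamgm := geom_mean_le_arith_mean2_weighted (by linarith : 0 ≤ (c + 1) / 2)
    (by linarith : 0 ≤ (1 - c) / 2) (rpow_nonneg hr.le c) (rpow_nonneg hr.le (c - 2))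
    (by ring)
  rw [← rpow_mul hr.le, ← rpow_mul hr.le, ← rpow_add hr,
    show c * ((c + 1) / 2) + (c - 2) * ((1 - c) / 2) = 2 * c - 1 by ring] at hamgm
  linarith

lemma rpow_two_mul_le {c r : ℝ} (hc₀ : 0 ≤ c) (hc₁ : c ≤ 1) (hr : 1 ≤ r) :
    r ^ (2 * c) ≤ c * (r ^ (c + 1) - r ^ (c - 1)) + 1 := by
  let f : ℝ → ℝ := fun s => c * (s ^ (c + 1) - s ^ (c - 1)) + 1 - s ^ (2 * c)
  have hf : ∀ s, 0 < s → HasDerivAt f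
      (c * ((c + 1) * s ^ c - (c - 1) * s ^ (c - 2)) - 2 * c * s ^ (2 * c - 1)) s := by
    intro s hs
    have hd (p : ℝ) := hasDerivAt_rpow_const (x := s) (p := p) (Or.inl hs.ne')
    have hd₁ := hd (c + 1)
    have hd₂ := hd (c - 1)
    rw [add_sub_cancel_right] at hd₁
    rw [show c - 1 - 1 = c - 2 by ring] at hd₂
    exact (((hd₁.sub hd₂).const_mul c).add_const 1).sub (hd (2 * c))
  have hmono : MonotoneOn f (Ici 1) := by
    refine monotoneOn_of_deriv_nonneg (convex_Ici 1)
      (fun s hs => (hf s (one_pos.trans_le hs)).continuousAt.continuousWithinAt)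
      (fun s hs => ?_) (fun s hs => ?_) <;> rw [interior_Ici] at hs
    · exact (hf s (one_pos.trans hs)).differentiableAt.differentiableWithinAt
    · have hs₀ : 0 < s := one_pos.trans hs
      rw [(hf s hs₀).deriv]
      nlinarith [two_mul_rpow_le (by linarith : -1 ≤ c) hc₁ hs₀]
  have := hmono self_mem_Ici (mem_Ici.2 hr) hr
  simp only [f, one_rpow] at this
  linarith

noncomputable def gOfRatio (c r : ℝ) : ℝ := (1 + r) * (r ^ c - 1) / (r - r ^ c)

lemma gOfRatio_monotoneOn {c : ℝ} (hc₀ : 0 ≤ c) (hc₁ : c < 1) :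
    MonotoneOn (gOfRatio c) (Ioi 1) := by
  have hf : ∀ r, 1 < r → HasDerivAt (gOfRatio c)
      (((r ^ c - 1 + (1 + r) * (c * r ^ (c - 1))) * (r - r ^ c) -
        (1 + r) * (r ^ c - 1) * (1 - c * r ^ (c - 1))) / (r - r ^ c) ^ 2) r := by
    intro r hr
    have hd := hasDerivAt_rpow_const (x := r) (p := c) (Or.inl (one_pos.trans hr).ne')
    have hD : r - r ^ c ≠ 0 := (sub_pos.2 (rpow_lt_self_of_one_lt hr hc₁)).ne'
    exact ((((hasDerivAt_id r).const_add 1).mul (hd.sub_const 1)).div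
      ((hasDerivAt_id r).sub hd) hD).congr_deriv (by simp)
  refine monotoneOn_of_deriv_nonneg (convex_Ioi 1)
    (fun r hr => (hf r hr).continuousAt.continuousWithinAt)
    (fun r hr => ?_) (fun r hr => ?_) <;> rw [interior_Ioi] at hr
  · exact (hf r hr).differentiableAt.differentiableWithinAt
  · rw [(hf r hr).deriv]
    refine div_nonneg ?_ (sq_nonneg _)
    have hr₀ : 0 < r := one_pos.trans hr
    have hc : r ^ c = r ^ (c - 1) * r := by rw [← rpow_add_one hr₀.ne', sub_add_cancel]
    have hc' : r ^ (c + 1) = r ^ (c - 1) * r * r := by rw [rpow_add_one hr₀.ne', hc]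
    have h2c : r ^ (2 * c) = r ^ c * r ^ c := by rw [two_mul, rpow_add hr₀]
    have hnum : 0 ≤ c * (r ^ (c + 1) - r ^ (c - 1)) + 1 - r ^ (2 * c) := by
      linarith [rpow_two_mul_le hc₀ hc₁.le hr.le]
    exact hnum.trans_eq (by rw [h2c, hc', hc]; ring)

lemma g_eq_gOfRatio {x : ℝ} (hx₀ : 1 / 2 < x) (hx₁ : x < 1) (b : ℝ) :
    g x b = gOfRatio (1 - b) (x / (1 - x)) := by
  have h₁ : 0 < 1 - x := by linarith
  rw [g, if_neg hx₀.ne', gOfRatio, div_rpow (by linarith) h₁.le]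
  field_simp
  ring

lemma g_den_pos {c x : ℝ} (hc : c < 1) (hx₀ : 1 / 2 < x) (hx₁ : x < 1) :
    0 < x * (1 - x) ^ c - (1 - x) * x ^ c := by
  have h₁ : 0 < 1 - x := by linarith
  have hr : 1 < x / (1 - x) := by rw [one_lt_div h₁]; linarith
  have := rpow_lt_self_of_one_lt hr hc
  rw [div_rpow (by linarith) h₁.le, div_lt_div_iff₀ (by positivity) h₁] at this
  linarith

lemma g_monotoneOn {b : ℝ} (hb₀ : 0 < b) (hb₁ : b ≤ 1) :
    MonotoneOn (fun x => g x b) (Ioo (1 / 2) 1) := by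
  intro u ⟨hu₀, hu₁⟩ v ⟨hv₀, hv₁⟩ huv
  have hr : ∀ z : ℝ, 1 / 2 < z → z < 1 → 1 < z / (1 - z) := fun z hz₀ hz₁ => by
    rw [one_lt_div (by linarith)]; linarith
  simp only [g_eq_gOfRatio hu₀ hu₁, g_eq_gOfRatio hv₀ hv₁]
  refine gOfRatio_monotoneOn (by linarith) (by linarith) (hr u hu₀ hu₁) (hr v hv₀ hv₁) ?_
  rw [div_le_div_iff₀ (by linarith) (by linarith)]
  nlinarith

lemma A_pos {h y : ℝ} (hh : 1 ≤ h) (hy : 0 ≤ y) : 0 < A h y := by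
  unfold A; nlinarith

lemma B_pos {h y : ℝ} (hh : 1 ≤ h) (hy : y ≤ 1) : 0 < B h y := by
  unfold B; nlinarith

lemma A_strictMono {h : ℝ} (hh : 1 < h) : StrictMono (A h) := fun y y' hyy' => by
  unfold A; nlinarith

lemma B_strictAnti {h : ℝ} (hh : 1 < h) : StrictAnti (B h) := fun y y' hyy' => by
  unfold B; nlinarith

lemma A_add_B (h y : ℝ) : A h y + B h y = h + 1 := by
  unfold A B; ring

lemma half_le_A_div {h y : ℝ} (hh : 1 ≤ h) (hy : 1 / 2 ≤ y) : 1 / 2 ≤ A h y / (h + 1) := by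
  rw [le_div_iff₀ (by linarith)]; unfold A; nlinarith

lemma div_add_lt_div_add_iff {a b c d : ℝ} (hab : 0 < a + b) (hcd : 0 < c + d) :
    a / (a + b) < c / (c + d) ↔ a * d < c * b := by
  rw [div_lt_div_iff₀ hab hcd]
  constructor <;> intro h <;> linarith

noncomputable def opinionStep (h b x y : ℝ) : ℝ :=
  x ^ b * A h y / (x ^ b * A h y + (1 - x) ^ b * B h y)

lemma opinionStep_half_left (h b y : ℝ) : opinionStep h b (1 / 2) y = A h y / (h + 1) := by
  rw [opinionStep, show (1 : ℝ) - 1 / 2 = 1 / 2 by norm_num, ← mul_add,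
    mul_div_mul_left _ _ (by positivity), A_add_B]

section OpinionStep

variable {h b x x' y y' z : ℝ}

lemma opinionStep_lt_one (hh : 1 ≤ h) (hx₀ : 0 < x) (hx₁ : x < 1) (hy₀ : 0 ≤ y) (hy₁ : y ≤ 1) :
    opinionStep h b x y < 1 := by
  have := A_pos hh hy₀
  have := B_pos hh hy₁
  have : 0 < 1 - x := by linarith
  rw [opinionStep, div_lt_one (by positivity)]
  linarith [show 0 < (1 - x) ^ b * B h y by positivity]

lemma opinionStep_lt_of_lt_left (hh : 1 ≤ h) (hb : 0 < b) (hx₀ : 0 < x) (hxx' : x < x')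
    (hx'₁ : x' < 1) (hy₀ : 0 ≤ y) (hy₁ : y ≤ 1) :
    opinionStep h b x y < opinionStep h b x' y := by
  have := A_pos hh hy₀
  have := B_pos hh hy₁
  have : 0 < 1 - x' := by linarith
  have : 0 < 1 - x := by linarith
  have : 0 < x' := by linarith
  rw [opinionStep, opinionStep, div_add_lt_div_add_iff (by positivity) (by positivity)]
  have hpow : x ^ b * (1 - x') ^ b < x' ^ b * (1 - x) ^ b :=
    mul_lt_mul'' (rpow_lt_rpow hx₀.le hxx' hb) (rpow_lt_rpow (by linarith) (by linarith) hb)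
      (by positivity) (by positivity)
  calc x ^ b * A h y * ((1 - x') ^ b * B h y) = x ^ b * (1 - x') ^ b * (A h y * B h y) := by ring
    _ < x' ^ b * (1 - x) ^ b * (A h y * B h y) := by gcongr
    _ = x' ^ b * A h y * ((1 - x) ^ b * B h y) := by ring

lemma opinionStep_lt_of_lt_right (hh : 1 < h) (hx₀ : 0 < x) (hx₁ : x < 1) (hy₀ : 0 ≤ y)
    (hyy' : y < y') (hy'₁ : y' ≤ 1) :
    opinionStep h b x y < opinionStep h b x y' := by
  have := A_pos hh.le hy₀
  have := A_pos hh.le (hy₀.trans hyy'.le)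
  have := B_pos hh.le hy'₁
  have := B_pos hh.le (hyy'.le.trans hy'₁)
  have := A_strictMono hh hyy'
  have := B_strictAnti hh hyy'
  have : 0 < 1 - x := by linarith
  rw [opinionStep, opinionStep, div_add_lt_div_add_iff (by positivity) (by positivity)]
  calc x ^ b * A h y * ((1 - x) ^ b * B h y') = x ^ b * (1 - x) ^ b * (A h y * B h y') := by ring
    _ < x ^ b * (1 - x) ^ b * (A h y' * B h y) := by gcongr
    _ = x ^ b * A h y' * ((1 - x) ^ b * B h y) := by ring

lemma opinionStep_self_le_self (hh : 1 ≤ h) (hb : 0 < b) (hx₀ : 1 / 2 < x)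
    (hx₁ : x < 1) (hg : h - 1 ≤ g x b) : opinionStep h b x x ≤ x := by
  have h₁ : 0 < 1 - x := by linarith
  have h₀ : 0 < x := by linarith
  rw [g, if_neg hx₀.ne', le_div_iff₀ (g_den_pos (by linarith) hx₀ hx₁)] at hg
  have hAB : (1 - x) ^ (1 - b) * A h x ≤ x ^ (1 - b) * B h x := by unfold A B; linarith
  have key := mul_le_mul_of_nonneg_left hAB (by positivity : 0 ≤ x ^ b * (1 - x) ^ b)
  have e₀ := rpow_one_sub_mul_rpow h₀ b
  have e₁ := rpow_one_sub_mul_rpow h₁ b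
  have := A_pos hh h₀.le
  have := B_pos hh hx₁.le
  rw [opinionStep, div_le_iff₀ (by positivity)]
  linear_combination key - (x ^ b * A h x) * e₁ + ((1 - x) ^ b * B h x) * e₀

lemma opinionStep_lt_of_diag_le (hh : 1 < h) (hx₀ : 0 < x) (hx₁ : x < 1) (hy₀ : 0 ≤ y)
    (hyx : y < x) (hdiag : opinionStep h b x x ≤ x) : opinionStep h b x y < x :=
  (opinionStep_lt_of_lt_right hh hx₀ hx₁ hy₀ hyx hx₁.le).trans_le hdiag

lemma opinionStep_lt_of_lt_of_diag_le (hh : 1 < h) (hb : 0 < b) (hx₀ : 0 < x) (hxz : x < z)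
    (hz₁ : z < 1) (hy₀ : 0 ≤ y) (hyx : y ≤ x) (hdiag : opinionStep h b z z ≤ z) :
    opinionStep h b x y < z :=
  (opinionStep_lt_of_lt_left hh.le hb hx₀ hxz hz₁ hy₀ (by linarith)).trans
    (opinionStep_lt_of_diag_le hh (hx₀.trans hxz) hz₁ hy₀ (hyx.trans_lt hxz) hdiag)

lemma continuousAt_opinionStep (hh : 1 ≤ h) (hb : 0 < b) (hx₀ : 0 < x) (hx₁ : x < 1)
    (hy₀ : 0 ≤ y) (hy₁ : y ≤ 1) :
    ContinuousAt (fun p : ℝ × ℝ => opinionStep h b p.1 p.2) (x, y) := by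
  have := A_pos hh hy₀
  have := B_pos hh hy₁
  have : 0 < 1 - x := by linarith
  have hden : x ^ b * A h y + (1 - x) ^ b * B h y ≠ 0 := by positivity
  unfold opinionStep A B at *
  exact ContinuousAt.div (by fun_prop (disch := exact Or.inr hb.le))
    (by fun_prop (disch := exact Or.inr hb.le)) hden

end OpinionStep

lemma tendsto_zero_of_succ_eq_mul_add {e v : ℕ → ℝ} {q : ℝ} (hq : |q| < 1)
    (he : ∀ n, e (n + 1) = q * e n + v n) (hv : Tendsto v atTop (𝓝 0)) :
    Tendsto e atTop (𝓝 0) := by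
  rw [Metric.tendsto_atTop]
  intro ε hε
  have hq' : 0 < 1 - |q| := by linarith
  obtain ⟨N, hN⟩ := Metric.tendsto_atTop.1 hv ((1 - |q|) * (ε / 2)) (by positivity)
  have hbound : ∀ m, |e (N + m)| ≤ |q| ^ m * |e N| + ε / 2 := by
    intro m
    induction m with
    | zero => rw [add_zero, pow_zero, one_mul]; linarith
    | succ m ih =>
      have hvm : |v (N + m)| < (1 - |q|) * (ε / 2) := by simpa using hN (N + m) (by omega)
      calc |e (N + (m + 1))| = |q * e (N + m) + v (N + m)| := by rw [← he]; rfl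
        _ ≤ |q| * |e (N + m)| + |v (N + m)| := by rw [← abs_mul]; exact abs_add_le _ _
        _ ≤ |q| * (|q| ^ m * |e N| + ε / 2) + (1 - |q|) * (ε / 2) := by gcongr
        _ = |q| ^ (m + 1) * |e N| + ε / 2 := by ring
  have hpow := (tendsto_pow_atTop_nhds_zero_of_lt_one (abs_nonneg q) hq).mul_const |e N|
  rw [zero_mul] at hpow
  obtain ⟨M, hM⟩ := Metric.tendsto_atTop.1 hpow (ε / 2) (by positivity)
  refine ⟨N + M, fun n hn => ?_⟩
  obtain ⟨m, rfl⟩ := Nat.exists_eq_add_of_le (le_of_add_le_left hn)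
  have := hM m (by omega)
  rw [Real.dist_eq, sub_zero, abs_of_nonneg (by positivity)] at this
  rw [Real.dist_eq, sub_zero]
  linarith [hbound m]

structure IsTrajectory (h φ b : ℝ) (x y : ℕ → ℝ) : Prop where
  x_succ : ∀ t, x (t + 1) = opinionStep h b (x t) (y t)
  y_succ : ∀ t, y (t + 1) = φ * x (t + 1) + (1 - φ) * (A h (y t) / (h + 1))

namespace IsTrajectory

variable {h φ b : ℝ} {x y : ℕ → ℝ}

lemma step (hT : IsTrajectory h φ b x y) (hh : 1 < h) (hφ₀ : 0 < φ) (hφ₁ : φ < 1) (hb : 0 < b)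
    {t : ℕ} (hx₀ : 1 / 2 < x t) (hx₁ : x t < 1) (hy₀ : 1 / 2 ≤ y t) (hy₁ : y t ≤ 1) :
    (1 / 2 < x (t + 1) ∧ x (t + 1) < 1) ∧ (1 / 2 < y (t + 1) ∧ y (t + 1) < x (t + 1)) := by
  have hA : 1 / 2 ≤ A h (y t) / (h + 1) := half_le_A_div hh.le hy₀
  have hAx : A h (y t) / (h + 1) < x (t + 1) := by
    rw [hT.x_succ, ← opinionStep_half_left h b]
    exact opinionStep_lt_of_lt_left hh.le hb (by norm_num) hx₀ hx₁ (by linarith) hy₁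
  have hx₁' : x (t + 1) < 1 := by
    rw [hT.x_succ]; exact opinionStep_lt_one hh.le (by linarith) hx₁ (by linarith) hy₁
  rw [hT.y_succ]
  -- `y (t + 1)` is a proper convex combination of `A h (y t) / (h + 1)` and `x (t + 1)`
  refine ⟨⟨by linarith, hx₁'⟩, ?_, ?_⟩ <;> nlinarith

lemma bounds (hT : IsTrajectory h φ b x y) (hh : 1 < h) (hφ₀ : 0 < φ) (hφ₁ : φ < 1)
    (hb : 0 < b) (hx : 1 / 2 < x 0 ∧ x 0 < 1) (hy : 1 / 2 ≤ y 0 ∧ y 0 ≤ x 0) (t : ℕ) :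
    (1 / 2 < x t ∧ x t < 1) ∧ (1 / 2 ≤ y t ∧ y t ≤ x t) := by
  induction t with
  | zero => exact ⟨hx, hy⟩
  | succ t ih =>
    obtain ⟨⟨hx₀, hx₁⟩, hy₀, hyx⟩ := ih
    obtain ⟨hx', hy₀', hyx'⟩ := hT.step hh hφ₀ hφ₁ hb hx₀ hx₁ hy₀ (hyx.trans hx₁.le)
    exact ⟨hx', hy₀'.le, hyx'.le⟩

lemma tendsto_y (hT : IsTrajectory h φ b x y) (hh : 1 < h) (hφ₀ : 0 ≤ φ) (hφ₁ : φ ≤ 1) {L : ℝ}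
    (hx : Tendsto x atTop (𝓝 L)) :
    Tendsto y atTop (𝓝 ((φ * (h + 1) * L + 1 - φ) / (φ * (h - 1) + 2))) := by
  -- `ys` is the fixed point of the affine map `z ↦ φ * L + (1 - φ) * (A h z / (h + 1))`,
  -- whose slope is `q`
  set ys := (φ * (h + 1) * L + 1 - φ) / (φ * (h - 1) + 2)
  set q := (1 - φ) * (h - 1) / (h + 1)
  have hq : |q| < 1 := by
    rw [abs_lt, lt_div_iff₀ (by linarith), div_lt_one (by linarith)]
    constructor <;> nlinarith
  have hys : ys * (φ * (h - 1) + 2) = φ * (h + 1) * L + 1 - φ :=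
    div_mul_cancel₀ _ (by nlinarith)
  clear_value ys
  have he : ∀ n, y (n + 1) - ys = q * (y n - ys) + φ * (x (n + 1) - L) := fun n => by
    have : h + 1 ≠ 0 := by linarith
    rw [hT.y_succ]
    unfold A q
    field_simp
    linear_combination -hys
  have hv : Tendsto (fun n => φ * (x (n + 1) - L)) atTop (𝓝 0) := by
    simpa using ((tendsto_add_atTop_iff_nat 1).2 hx).sub_const L |>.const_mul φ
  simpa using (tendsto_zero_of_succ_eq_mul_add (e := fun n => y n - ys) hq he hv).add_const ys

lemma eq_opinionStep_of_tendsto (hT : IsTrajectory h φ b x y) (hh : 1 ≤ h) (hb : 0 < b)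
    {L ys : ℝ} (hL₀ : 0 < L) (hL₁ : L < 1) (hys₀ : 0 ≤ ys) (hys₁ : ys ≤ 1)
    (hx : Tendsto x atTop (𝓝 L)) (hy : Tendsto y atTop (𝓝 ys)) :
    L = opinionStep h b L ys := by
  refine tendsto_nhds_unique ((tendsto_add_atTop_iff_nat 1).2 hx) ?_
  simp only [hT.x_succ]
  exact (continuousAt_opinionStep hh hb hL₀ hL₁ hys₀ hys₁).tendsto.comp (hx.prodMk_nhds hy)

lemma x_lt_of_le (hT : IsTrajectory h φ b x y) (hh : 1 < h) (hφ₀ : 0 < φ) (hφ₁ : φ < 1)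
    (hb : 0 < b) (hx : 1 / 2 < x 0 ∧ x 0 < 1) (hy : 1 / 2 ≤ y 0 ∧ y 0 ≤ x 0) {xhat : ℝ}
    (hxhat : xhat < 1) (hdiag : opinionStep h b xhat xhat ≤ xhat) {T t : ℕ} (hxT : x T < xhat)
    (hTt : T ≤ t) : x t < xhat := by
  induction t, hTt using Nat.le_induction with
  | base => exact hxT
  | succ t _ ih =>
    obtain ⟨⟨hx₀, -⟩, hy₀, hyx⟩ := hT.bounds hh hφ₀ hφ₁ hb hx hy t
    rw [hT.x_succ]
    exact opinionStep_lt_of_lt_of_diag_le hh hb (by linarith) ih hxhat (by linarith) hyx hdiag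

lemma exists_tendsto_of_eventually_le (hT : IsTrajectory h φ b x y) (hh : 1 < h) (hφ₀ : 0 < φ)
    (hφ₁ : φ < 1) (hb : 0 < b) (hx : 1 / 2 < x 0 ∧ x 0 < 1) (hy : 1 / 2 ≤ y 0 ∧ y 0 ≤ x 0)
    {xhat : ℝ} (hdiag : ∀ z, xhat ≤ z → z < 1 → opinionStep h b z z ≤ z)
    (hev : ∀ᶠ t in atTop, xhat ≤ x t) :
    ∃ L, xhat ≤ L ∧ L < 1 ∧ Tendsto x atTop (𝓝 L) := by
  have hbd := hT.bounds hh hφ₀ hφ₁ hb hx hy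
  obtain ⟨N, hN⟩ := eventually_atTop.1 hev
  have hdec (n : ℕ) : x (n + 1 + (N + 1)) ≤ x (n + (N + 1)) := by
    obtain ⟨⟨hx₀, hx₁⟩, hy₀, hyx⟩ := hbd (n + N)
    obtain ⟨⟨hx₀', hx₁'⟩, hy₀', hyx'⟩ := hT.step hh hφ₀ hφ₁ hb hx₀ hx₁ hy₀ (hyx.trans hx₁.le)
    rw [show n + 1 + (N + 1) = n + N + 1 + 1 by omega, show n + (N + 1) = n + N + 1 by omega,
      hT.x_succ]
    exact (opinionStep_lt_of_diag_le hh (by linarith) hx₁' (by linarith) hyx'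
      (hdiag _ (hN _ (by omega)) hx₁')).le
  have hanti : Antitone fun n => x (n + (N + 1)) := antitone_nat_of_succ_le hdec
  have hlim := tendsto_atTop_ciInf hanti ⟨xhat, by rintro _ ⟨n, rfl⟩; exact hN _ (by omega)⟩
  have hxL := (tendsto_add_atTop_iff_nat _).1 hlim
  exact ⟨_, ge_of_tendsto hxL hev, (hanti.le_of_tendsto hlim 0).trans_lt (hbd _).1.2, hxL⟩

lemma frequently_x_lt (hT : IsTrajectory h φ b x y) (hh : 1 < h) (hφ₀ : 0 < φ) (hφ₁ : φ < 1)
    (hb : 0 < b) (hx : 1 / 2 < x 0 ∧ x 0 < 1) (hy : 1 / 2 ≤ y 0 ∧ y 0 ≤ x 0) {xhat : ℝ}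
    (hxhat : 1 / 2 < xhat) (hdiag : ∀ z, xhat ≤ z → z < 1 → opinionStep h b z z ≤ z) :
    ∃ᶠ t in atTop, x t < xhat := by
  by_contra hne
  simp only [not_frequently, not_lt] at hne
  obtain ⟨L, hL, hL₁, hxL⟩ := hT.exists_tendsto_of_eventually_le hh hφ₀ hφ₁ hb hx hy hdiag hne
  have hyL := hT.tendsto_y hh hφ₀.le hφ₁.le hxL
  set ys := (φ * (h + 1) * L + 1 - φ) / (φ * (h - 1) + 2)
  have hys₀ : 1 / 2 ≤ ys := ge_of_tendsto' hyL fun t => (hT.bounds hh hφ₀ hφ₁ hb hx hy t).2.1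
  have hysL : ys < L := by rw [div_lt_iff₀ (by nlinarith)]; nlinarith
  have hfix := hT.eq_opinionStep_of_tendsto hh.le hb (by linarith) hL₁ (by linarith)
    (by linarith) hxL hyL
  exact (opinionStep_lt_of_diag_le hh (by linarith) hL₁ (by linarith) hysL
    (hdiag L hL hL₁)).ne' hfix

end IsTrajectory

theorem stmt_14_general (h φ b : ℝ) (x y : ℕ → ℝ) (xhat1 : ℝ)
    (hh : 1 < h) (hφ : 0 < φ ∧ φ < 1)
    (hx0 : 1 / 2 < x 0 ∧ x 0 < 1) (hy0 : 1 / 2 ≤ y 0 ∧ y 0 ≤ x 0)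
    (hxupd : ∀ t : ℕ, x (t + 1) =
      (x t) ^ b * A h (y t) / ((x t) ^ b * A h (y t) + (1 - x t) ^ b * B h (y t)))
    (hyupd : ∀ t : ℕ, y (t + 1) = φ * x (t + 1) + (1 - φ) * (A h (y t) / (h + 1)))
    (hb : 2 / (φ * (h - 1) + 2) < b ∧ b < 1)
    (hxhat1 : xhat1 ∈ Set.Ioo (1 / 2 : ℝ) 1 ∧ g xhat1 b = h - 1)
    (k : ℕ) :
    ∃ T : ℕ, k < T ∧ ∀ t : ℕ, T < t → x t < xhat1 := by
  obtain ⟨hφ₀, hφ₁⟩ := hφ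
  obtain ⟨⟨hxhat₀, hxhat₁⟩, hg⟩ := hxhat1
  have hb₀ : 0 < b := by
    have : 0 < φ * (h - 1) := by nlinarith
    exact lt_trans (by positivity) hb.1
  have hdiag (z : ℝ) (hz : xhat1 ≤ z) (hz₁ : z < 1) : opinionStep h b z z ≤ z :=
    opinionStep_self_le_self hh.le hb₀ (by linarith) hz₁
      (hg.ge.trans (g_monotoneOn hb₀ hb.2.le ⟨hxhat₀, hxhat₁⟩ ⟨by linarith, hz₁⟩ hz))
  have hT : IsTrajectory h φ b x y := ⟨hxupd, hyupd⟩
  obtain ⟨T, hkT, hxT⟩ := frequently_atTop.1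
    (hT.frequently_x_lt hh hφ₀ hφ₁ hb₀ hx0 hy0 hxhat₀ hdiag) (k + 1)
  exact ⟨T, hkT, fun t ht =>
    hT.x_lt_of_le hh hφ₀ hφ₁ hb₀ hx0 hy0 hxhat₁ (hdiag _ le_rfl hxhat₁) hxT ht.le⟩

/-- Claim 2 in the proof of Theorem 3: in the moderate-bias regime, if
`x(k) ≥ x̂(1,h,b)` for some time `k`, then there exists `T > k` such that
`x(t) < x̂(1,h,b)` for all `t > T`. -/
theorem stmt_14 (h φ b : ℝ) (x y : ℕ → ℝ) (xhat1 : ℝ)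
    (hh : 1 < h) (hφ : 0 < φ ∧ φ < 1)
    (hx0 : 1 / 2 < x 0 ∧ x 0 < 1) (hy0 : 1 / 2 ≤ y 0 ∧ y 0 ≤ x 0)
    (hxupd : ∀ t : ℕ, x (t + 1) =
      (x t) ^ b * A h (y t) / ((x t) ^ b * A h (y t) + (1 - x t) ^ b * B h (y t)))
    (hyupd : ∀ t : ℕ, y (t + 1) = φ * x (t + 1) + (1 - φ) * (A h (y t) / (h + 1)))
    (hb : 2 / (φ * (h - 1) + 2) < b ∧ b < 1)
    (hxhat1 : xhat1 ∈ Set.Ioo (1 / 2 : ℝ) 1 ∧ g xhat1 b = h - 1)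
    (k : ℕ) (hk : xhat1 ≤ x k) :
    ∃ T : ℕ, k < T ∧ ∀ t : ℕ, T < t → x t < xhat1 :=
  stmt_14_general h φ b x y xhat1 hh hφ hx0 hy0 hxupd hyupd hb hxhat1 k
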